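/- arXiv:1601.06408 — 3 statements merged into one kernel-verified Lean document; each statement's English description precedes it below -/
import Mathlib

section
/- Let A be an n×n real symmetric positive-definite matrix. If there exists a symmetric matrix B such that (xᵀAx)² = |x|² · (xᵀBx) for all x ∈ ℝⁿ, then A is a scalar multiple of the identity matrix. -/
open Matrix

lemma quad_form_single_combo {n : ℕ} (M : Matrix (Fin n) (Fin n) ℝ) (i j : Fin n) (t : ℝ) :
    ((Pi.single i 1 : Fin n → ℝ) + t • (Pi.single j 1 : Fin n → ℝ)) ⬝ᵥ
      M.mulVec ((Pi.single i 1 : Fin n → ℝ) + t • (Pi.single j 1 : Fin n → ℝ))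
      = M i i + t * M i j + t * M j i + t ^ 2 * M j j := by
  simp [Matrix.mulVec_add, Matrix.mulVec_smul, add_dotProduct, smul_dotProduct,
    dotProduct_add, dotProduct_smul, Matrix.mulVec_single, single_dotProduct,
    dotProduct_single, smul_eq_mul]
  ring

lemma dot_single_combo {n : ℕ} (i j : Fin n) (hij : i ≠ j) (t : ℝ) :
    ((Pi.single i 1 : Fin n → ℝ) + t • (Pi.single j 1 : Fin n → ℝ)) ⬝ᵥ
      ((Pi.single i 1 : Fin n → ℝ) + t • (Pi.single j 1 : Fin n → ℝ))
      = 1 + t ^ 2 := by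
  simp [add_dotProduct, smul_dotProduct, dotProduct_add, dotProduct_smul,
    single_dotProduct, dotProduct_single, Pi.single_apply, hij, hij.symm,
    smul_eq_mul]
  ring

theorem stmt_0 {n : ℕ} (A : Matrix (Fin n) (Fin n) ℝ)
    (hA : A.IsSymm) (hApos : A.PosDef)
    (hB : ∃ B : Matrix (Fin n) (Fin n) ℝ, B.IsSymm ∧
      ∀ x : Fin n → ℝ, (x ⬝ᵥ A.mulVec x) ^ 2 = (x ⬝ᵥ x) * (x ⬝ᵥ B.mulVec x)) :
    ∃ c : ℝ, A = c • (1 : Matrix (Fin n) (Fin n) ℝ) := by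
  obtain ⟨B, hBs, hEq⟩ := hB
  have key : ∀ i j : Fin n, i ≠ j → A i j = 0 ∧ A i i = A j j := by
    intro i j hij
    have hAij : A j i = A i j := by
      conv_lhs => rw [← hA]
      rfl
    have hBij : B j i = B i j := by
      conv_lhs => rw [← hBs]
      rfl
    have h : ∀ t : ℝ, (A i i + t * A i j + t * A i j + t ^ 2 * A j j) ^ 2
        = (1 + t ^ 2) * (B i i + t * B i j + t * B i j + t ^ 2 * B j j) := by
      intro t
      have := hEq ((Pi.single i 1 : Fin n → ℝ) + t • (Pi.single j 1 : Fin n → ℝ))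
      rwa [quad_form_single_combo, quad_form_single_combo, dot_single_combo i j hij,
        hAij, hBij] at this
    have h0 := h 0
    have h1 := h 1
    have h2 := h (-1)
    have h3 := h 2
    have h4 := h (-2)
    norm_num at h0 h1 h2 h3 h4
    have e3 : A i j * (A i i - A j j) = 0 := by
      linear_combination (5/24 : ℝ) * h1 - (5/24 : ℝ) * h2 - (1/24 : ℝ) * h3 + (1/24 : ℝ) * h4
    have e4 : (A i i - A j j) ^ 2 = 4 * A i j ^ 2 := by
      linear_combination (-10/12 : ℝ) * h1 + (-10/12 : ℝ) * h2 + (1/12 : ℝ) * h3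
        + (1/12 : ℝ) * h4 + (30/12 : ℝ) * h0
    have h5 : (A i j * (A i i - A j j)) ^ 2 = 0 := by rw [e3]; ring
    have h6 : (4 : ℝ) * A i j ^ 4 = 0 := by linear_combination h5 - A i j ^ 2 * e4
    have hc : A i j = 0 := by
      have : A i j ^ 4 = 0 := by linarith
      exact pow_eq_zero_iff (by norm_num) |>.mp this
    refine ⟨hc, ?_⟩
    have : (A i i - A j j) ^ 2 = 0 := by rw [e4, hc]; ring
    have := sq_eq_zero_iff.mp this
    linarith
  rcases Nat.eq_zero_or_pos n with hn | hn
  · subst hn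
    exact ⟨0, by ext i; exact absurd i.2 (by omega)⟩
  · refine ⟨A ⟨0, hn⟩ ⟨0, hn⟩, ?_⟩
    ext i j
    by_cases hij : i = j
    · subst hij
      by_cases h0 : i = ⟨0, hn⟩
      · subst h0; simp
      · have := (key i ⟨0, hn⟩ h0).2
        simp [this]
    · have := (key i j hij).1
      simp [this, Matrix.one_apply_ne hij, hij]
end

section
/- Let d ≥ 1 and let A be a d×d real symmetric matrix. Define, for x ∈ ℝᵈ \ {0}, K(x) = (1/|x|^{d+2})·[−d·(Tr A)² − 2d·Tr(A²)] + (xᵀAx·Tr A/|x|^{d+4})·2d(d+2) + (xᵀA²x/|x|^{d+4})·4d(d+2) − ((xᵀAx)²/|x|^{d+6})·d(d+2)(d+4). If A is not a scalar multiple of the identity, then the function x ↦ |x|^{d+6}·K(x) is a nonzero polynomial on ℝᵈ \ {0}. -/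
/-
Write N, Q, Q₂ for the quadratic forms |x|², xᵀAx, xᵀA²x. Clearing denominators,
|x|^{d+6} K(x) is the polynomial P = c N² + N (α Q + β Q₂) − γ Q² for constants c, α, β and
γ = d(d+2)(d+4) > 0. If A is not scalar it has orthonormal eigenvectors u, v with eigenvalues
λ ≠ μ, and on x = u + t v one gets N = 1 + s, Q = λ + μ s, Q₂ = λ² + μ² s with s = t².
There P is a quadratic polynomial in s whose value at s = −1, where N vanishes, is
−γ (λ − μ)² ≠ 0, so P ≠ 0.
-/

open Matrix Finset

noncomputable def fluctKernel {d : ℕ} (A : Matrix (Fin d) (Fin d) ℝ)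
    (x : EuclideanSpace ℝ (Fin d)) : ℝ :=
  let q : ℝ := ∑ i, ∑ j, A i j * x i * x j
  let q2 : ℝ := ∑ i, ∑ j, (A * A) i j * x i * x j
  (1 / ‖x‖ ^ (d + 2)) * (-(d : ℝ) * (A.trace) ^ 2 - 2 * d * (A * A).trace)
    + (q * A.trace / ‖x‖ ^ (d + 4)) * (2 * d * (d + 2))
    + (q2 / ‖x‖ ^ (d + 4)) * (4 * d * (d + 2))
    - ((q ^ 2) / ‖x‖ ^ (d + 6)) * (d * (d + 2) * (d + 4))

open MvPolynomial

namespace Matrix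

variable {R n : Type*} [CommSemiring R] [Fintype n]

noncomputable def quadFormPoly (M : Matrix n n R) : MvPolynomial n R :=
  ∑ i, ∑ j, C (M i j) * X i * X j

lemma dotProduct_mulVec_self_eq_sum (M : Matrix n n R) (y : n → R) :
    y ⬝ᵥ (M *ᵥ y) = ∑ i, ∑ j, M i j * y i * y j := by
  simp only [dotProduct, mulVec, Finset.mul_sum]
  exact Finset.sum_congr rfl fun i _ => Finset.sum_congr rfl fun j _ => by ring

@[simp]
lemma eval_quadFormPoly (M : Matrix n n R) (y : n → R) :
    eval y M.quadFormPoly = y ⬝ᵥ (M *ᵥ y) := by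
  simp [quadFormPoly, dotProduct_mulVec_self_eq_sum]

lemma dotProduct_mulVec_add_smul_of_orthonormal_eigen {M : Matrix n n R} {u v : n → R}
    {a b : R} (hu : M *ᵥ u = a • u) (hv : M *ᵥ v = b • v) (huu : u ⬝ᵥ u = 1)
    (hvv : v ⬝ᵥ v = 1) (huv : u ⬝ᵥ v = 0) (t : R) :
    (u + t • v) ⬝ᵥ (M *ᵥ (u + t • v)) = a + b * t ^ 2 := by
  simp only [mulVec_add, mulVec_smul, hu, hv, add_dotProduct, dotProduct_add, dotProduct_smul,
    smul_dotProduct, smul_eq_mul, huu, hvv, huv, dotProduct_comm v u]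
  ring

namespace IsHermitian

variable {𝕜 : Type*} [RCLike 𝕜] [DecidableEq n] {A : Matrix n n 𝕜}

lemma eq_smul_one_of_eigenvalues_eq (hA : A.IsHermitian) {c : ℝ}
    (h : ∀ i, hA.eigenvalues i = c) : A = c • (1 : Matrix n n 𝕜) := by
  have hdiag :
      diagonal (RCLike.ofReal ∘ hA.eigenvalues) = algebraMap 𝕜 (Matrix n n 𝕜) c := by
    rw [algebraMap_eq_diagonal]
    congr 1
    ext i
    simp [h i]
  rw [hA.spectral_theorem, hdiag, Algebra.algebraMap_eq_smul_one, map_smul, map_one,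
    ← RCLike.real_smul_eq_coe_smul]

lemma exists_eigenvalues_ne (hA : A.IsHermitian)
    (h : ¬∃ c : ℝ, A = c • (1 : Matrix n n 𝕜)) : ∃ i j, hA.eigenvalues i ≠ hA.eigenvalues j := by
  by_contra! hall
  apply h
  rcases isEmpty_or_nonempty n with hn | ⟨⟨i₀⟩⟩
  · exact ⟨0, Subsingleton.elim _ _⟩
  · exact ⟨_, hA.eq_smul_one_of_eigenvalues_eq fun i => hall i i₀⟩

end IsHermitian

lemma IsHermitian.dotProduct_eigenvectorBasis {A : Matrix n n ℝ} [DecidableEq n]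
    (hA : A.IsHermitian) (i j : n) :
    ⇑(hA.eigenvectorBasis i) ⬝ᵥ ⇑(hA.eigenvectorBasis j) = if i = j then 1 else 0 := by
  rw [← hA.eigenvectorBasis.inner_eq_ite, EuclideanSpace.inner_eq_star_dotProduct,
    star_trivial, dotProduct_comm]

end Matrix

section FluctKernel

variable {d : ℕ}

noncomputable def fluctPoly (A : Matrix (Fin d) (Fin d) ℝ) : MvPolynomial (Fin d) ℝ :=
  let N := quadFormPoly (1 : Matrix (Fin d) (Fin d) ℝ)
  C (-(d : ℝ) * A.trace ^ 2 - 2 * d * (A * A).trace) * N ^ 2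
    + N * (C (2 * d * (d + 2) * A.trace : ℝ) * A.quadFormPoly
      + C (4 * d * (d + 2) : ℝ) * (A * A).quadFormPoly)
    - C ((d : ℝ) * (d + 2) * (d + 4)) * A.quadFormPoly ^ 2

lemma eval_fluctPoly (A : Matrix (Fin d) (Fin d) ℝ) (y : Fin d → ℝ) :
    eval y (fluctPoly A) =
      (-(d : ℝ) * A.trace ^ 2 - 2 * d * (A * A).trace) * (y ⬝ᵥ y) ^ 2
        + (y ⬝ᵥ y) * (2 * d * (d + 2) * A.trace * (y ⬝ᵥ (A *ᵥ y))
          + 4 * d * (d + 2) * (y ⬝ᵥ ((A * A) *ᵥ y)))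
        - d * (d + 2) * (d + 4) * (y ⬝ᵥ (A *ᵥ y)) ^ 2 := by
  simp [fluctPoly]

lemma norm_pow_mul_fluctKernel (A : Matrix (Fin d) (Fin d) ℝ) {x : EuclideanSpace ℝ (Fin d)}
    (hx : x ≠ 0) : ‖x‖ ^ (d + 6) * fluctKernel A x = eval (⇑x) (fluctPoly A) := by
  have hnorm : ‖x‖ ≠ 0 := norm_ne_zero_iff.mpr hx
  have hnorm_sq : (⇑x) ⬝ᵥ (⇑x) = ‖x‖ ^ 2 := by
    rw [EuclideanSpace.real_norm_sq_eq]
    simp [dotProduct, sq]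
  rw [eval_fluctPoly, hnorm_sq, dotProduct_mulVec_self_eq_sum, dotProduct_mulVec_self_eq_sum]
  unfold fluctKernel
  field_simp
  ring

lemma eval_fluctPoly_add_smul {A : Matrix (Fin d) (Fin d) ℝ} {u v : Fin d → ℝ} {a b : ℝ}
    (hu : A *ᵥ u = a • u) (hv : A *ᵥ v = b • v) (huu : u ⬝ᵥ u = 1) (hvv : v ⬝ᵥ v = 1)
    (huv : u ⬝ᵥ v = 0) (t : ℝ) :
    eval (u + t • v) (fluctPoly A) =
      (-(d : ℝ) * A.trace ^ 2 - 2 * d * (A * A).trace) * (1 + t ^ 2) ^ 2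
        + (1 + t ^ 2) * (2 * d * (d + 2) * A.trace * (a + b * t ^ 2)
          + 4 * d * (d + 2) * (a ^ 2 + b ^ 2 * t ^ 2))
        - d * (d + 2) * (d + 4) * (a + b * t ^ 2) ^ 2 := by
  have hsq {w : Fin d → ℝ} {c : ℝ} (hc : A *ᵥ w = c • w) : (A * A) *ᵥ w = c ^ 2 • w := by
    rw [← mulVec_mulVec, hc, mulVec_smul, hc, smul_smul, sq]
  have hN : (u + t • v) ⬝ᵥ (u + t • v) = 1 + t ^ 2 := by
    simpa using dotProduct_mulVec_add_smul_of_orthonormal_eigen (M := 1) (a := 1) (b := 1)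
      (by simp) (by simp) huu hvv huv t
  rw [eval_fluctPoly, hN, dotProduct_mulVec_add_smul_of_orthonormal_eigen hu hv huu hvv huv,
    dotProduct_mulVec_add_smul_of_orthonormal_eigen (hsq hu) (hsq hv) huu hvv huv]

lemma fluctPoly_ne_zero {A : Matrix (Fin d) (Fin d) ℝ} (hA : A.IsHermitian)
    (h : ¬∃ c : ℝ, A = c • (1 : Matrix (Fin d) (Fin d) ℝ)) : fluctPoly A ≠ 0 := by
  obtain ⟨i, j, hij⟩ := hA.exists_eigenvalues_ne h
  have hne : i ≠ j := by rintro rfl; exact hij rfl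
  have hγ : (0 : ℝ) < d * (d + 2) * (d + 4) := by
    have : (0 : ℝ) < d := Nat.cast_pos.mpr i.pos
    positivity
  intro hP
  have hval := eval_fluctPoly_add_smul (hA.mulVec_eigenvectorBasis i)
    (hA.mulVec_eigenvectorBasis j) (by simpa using hA.dotProduct_eigenvectorBasis i i)
    (by simpa using hA.dotProduct_eigenvectorBasis j j)
    (by simpa [hne] using hA.dotProduct_eigenvectorBasis i j)
  simp only [hP, map_zero] at hval
  -- The right side of `hval` is quadratic in s = t²; Lagrange extrapolation from s = 0, 1, 4
  -- to s = -1 leaves only the `(a + b s)²` term.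
  have key : (d * (d + 2) * (d + 4) : ℝ) * (hA.eigenvalues i - hA.eigenvalues j) ^ 2 = 0 := by
    linear_combination (5 / 2 : ℝ) * hval 0 - (5 / 3 : ℝ) * hval 1 + (1 / 6 : ℝ) * hval 2
  have hsq := (mul_eq_zero.mp key).resolve_left hγ.ne'
  exact hij (sub_eq_zero.mp ((pow_eq_zero_iff two_ne_zero).mp hsq))

end FluctKernel

theorem stmt_4_general {d : ℕ} (A : Matrix (Fin d) (Fin d) ℝ)
    (hAsymm : A.IsSymm)
    (hnotscalar : ¬ ∃ c : ℝ, A = c • (1 : Matrix (Fin d) (Fin d) ℝ)) :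
    ∃ P : MvPolynomial (Fin d) ℝ, P ≠ 0 ∧
      ∀ x : EuclideanSpace ℝ (Fin d), x ≠ 0 →
        ‖x‖ ^ (d + 6) * fluctKernel A x = MvPolynomial.eval (fun i => x i) P :=
  ⟨fluctPoly A, fluctPoly_ne_zero (isHermitian_iff_isSymm.mpr hAsymm) hnotscalar,
    fun _ hx => norm_pow_mul_fluctKernel A hx⟩

theorem stmt_4 {d : ℕ} (hd : 1 ≤ d) (A : Matrix (Fin d) (Fin d) ℝ)
    (hAsymm : A.IsSymm) (hApos : A.PosDef)
    (hnotscalar : ¬ ∃ c : ℝ, A = c • (1 : Matrix (Fin d) (Fin d) ℝ)) :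
    ∃ P : MvPolynomial (Fin d) ℝ, P ≠ 0 ∧
      ∀ x : EuclideanSpace ℝ (Fin d), x ≠ 0 →
        ‖x‖ ^ (d + 6) * fluctKernel A x = MvPolynomial.eval (fun i => x i) P :=
  stmt_4_general A hAsymm hnotscalar
end

section
/- Let X be a square-integrable random variable on a probability space, and let G ⊂ F be sub-σ-algebras such that X is F-measurable. If E[X·E[X|F] | G] = (E[X|G])² almost surely, then E[(E[X|F])²] = E[(E[X|G])²], and consequently E[X|F] = E[X|G] almost surely. -/
/-! Since `X` is `m₁`-measurable, `E[X|m₁] = X`, and the hypothesis integrates to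
`E[X²] = E[(E[X|m₂])²]`. Conditional expectation is an orthogonal projection in `L²`, so
`E[(X - E[X|m₂])²] = E[X²] - E[(E[X|m₂])²] = 0`. -/

open MeasureTheory

section

variable {Ω : Type*} {m m0 : MeasurableSpace Ω} {μ : Measure Ω} [IsFiniteMeasure μ]
  {X : Ω → ℝ}

lemma integral_mul_condExp_eq_integral_condExp_sq (hm : m ≤ m0) (hX : MemLp X 2 μ) :
    ∫ ω, X ω * μ[X|m] ω ∂μ = ∫ ω, (μ[X|m] ω) ^ 2 ∂μ := by
  have hXm : MemLp μ[X|m] 2 μ := hX.condExp one_le_two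
  have hpull : μ[μ[X|m] * X|m] =ᵐ[μ] μ[X|m] * μ[X|m] :=
    condExp_mul_of_stronglyMeasurable_left stronglyMeasurable_condExp
      (hXm.integrable_mul hX) (hX.integrable one_le_two)
  calc ∫ ω, X ω * μ[X|m] ω ∂μ = ∫ ω, (μ[X|m] * X) ω ∂μ := by
        simp only [Pi.mul_apply, mul_comm]
    _ = ∫ ω, μ[μ[X|m] * X|m] ω ∂μ := (integral_condExp hm).symm
    _ = ∫ ω, (μ[X|m] * μ[X|m]) ω ∂μ := integral_congr_ae hpull
    _ = ∫ ω, (μ[X|m] ω) ^ 2 ∂μ := by simp only [Pi.mul_apply, sq]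

lemma integral_sub_condExp_sq (hm : m ≤ m0) (hX : MemLp X 2 μ) :
    ∫ ω, (X ω - μ[X|m] ω) ^ 2 ∂μ =
      ∫ ω, X ω ^ 2 ∂μ - ∫ ω, (μ[X|m] ω) ^ 2 ∂μ := by
  have hXm : MemLp μ[X|m] 2 μ := hX.condExp one_le_two
  have hcross : Integrable (fun ω => 2 * (X ω * μ[X|m] ω)) μ :=
    (hX.integrable_mul hXm).const_mul 2
  have hfirst : Integrable (fun ω => X ω ^ 2 - 2 * (X ω * μ[X|m] ω)) μ :=
    hX.integrable_sq.sub hcross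
  calc ∫ ω, (X ω - μ[X|m] ω) ^ 2 ∂μ
      = ∫ ω, (X ω ^ 2 - 2 * (X ω * μ[X|m] ω) + (μ[X|m] ω) ^ 2) ∂μ := by
        congr 1 with ω; ring
    _ = ∫ ω, X ω ^ 2 ∂μ - 2 * ∫ ω, X ω * μ[X|m] ω ∂μ
          + ∫ ω, (μ[X|m] ω) ^ 2 ∂μ := by
        rw [integral_add hfirst hXm.integrable_sq,
          integral_sub hX.integrable_sq hcross, integral_const_mul]
    _ = ∫ ω, X ω ^ 2 ∂μ - ∫ ω, (μ[X|m] ω) ^ 2 ∂μ := by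
        rw [integral_mul_condExp_eq_integral_condExp_sq hm hX]; ring

end

theorem stmt_9 {Ω : Type*} {m0 : MeasurableSpace Ω} {μ : Measure Ω}
    [IsProbabilityMeasure μ] (m₁ m₂ : MeasurableSpace Ω)
    (h21 : m₂ ≤ m₁) (h10 : m₁ ≤ m0)
    (X : Ω → ℝ) (hX2 : MemLp X 2 μ) (hXmeas : StronglyMeasurable[m₁] X)
    (hmarkov : μ[fun ω => X ω * (μ[X|m₁]) ω | m₂]
      =ᵐ[μ] fun ω => ((μ[X|m₂]) ω) ^ 2) :
    (∫ ω, ((μ[X|m₁]) ω) ^ 2 ∂μ) = ∫ ω, ((μ[X|m₂]) ω) ^ 2 ∂μ ∧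
      μ[X|m₁] =ᵐ[μ] μ[X|m₂] := by
  have hm₂ : m₂ ≤ m0 := h21.trans h10
  rw [condExp_of_stronglyMeasurable h10 hXmeas (hX2.integrable one_le_two)] at hmarkov ⊢
  have hsq : ∫ ω, X ω ^ 2 ∂μ = ∫ ω, (μ[X|m₂] ω) ^ 2 ∂μ :=
    calc ∫ ω, X ω ^ 2 ∂μ = ∫ ω, μ[fun ω => X ω * X ω|m₂] ω ∂μ := by
          rw [integral_condExp hm₂]; simp only [sq]
      _ = ∫ ω, (μ[X|m₂] ω) ^ 2 ∂μ := integral_congr_ae hmarkov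
  have hdiff : (fun ω => (X ω - μ[X|m₂] ω) ^ 2) =ᵐ[μ] 0 := by
    refine (integral_eq_zero_iff_of_nonneg (fun ω => sq_nonneg _) ?_).1 ?_
    · exact (hX2.sub (hX2.condExp one_le_two)).integrable_sq
    · rw [integral_sub_condExp_sq hm₂ hX2, hsq, sub_self]
  refine ⟨hsq, ?_⟩
  filter_upwards [hdiff] with ω hω
  exact sub_eq_zero.1 (pow_eq_zero_iff two_ne_zero |>.1 hω)
end
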